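/- Let (Ω, 𝓕) be a measurable space, let 0 < ε ≤ 1/2, and let P₁, P₂ be probability measures on Ω with d_TV(P₁, P₂) ≤ ε/(1−ε). Then there exist probability measures Q₁, Q₂ on Ω such that (1−ε)·P₁ + ε·Q₁ = (1−ε)·P₂ + ε·Q₂; that is, P₁ and P₂ admit a common Huber ε-contamination, so no estimator can distinguish them from samples, and no algorithm can learn a distribution to total variation accuracy less than ε/(1−ε) in Huber's ε-contamination model. -/

import Mathlib

open MeasureTheory ProbabilityTheory
open scoped Classical

/-- The Gaussian measure `N(μ, I)` on `ℝ^d`, i.e. the product of `d` one-dimensional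
Gaussians of variance `1` centered at the coordinates of `μ`. -/
noncomputable def gaussId (d : ℕ) (μ : EuclideanSpace ℝ (Fin d)) :
    Measure (EuclideanSpace ℝ (Fin d)) :=
  (Measure.pi fun i => gaussianReal (μ i) 1).map
    (MeasurableEquiv.toLp 2 (Fin d → ℝ))

/-- The mean-zero Gaussian measure `N(0, Σ)` on `ℝ^d` with covariance matrix `Σ`:
the pushforward of the standard Gaussian under `x ↦ Σ^{1/2} x`. -/
noncomputable def gaussCov (d : ℕ) {S : Matrix (Fin d) (Fin d) ℝ} (hS : S.PosSemidef) :
    Measure (EuclideanSpace ℝ (Fin d)) :=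
  (gaussId d 0).map (fun x =>
    (EuclideanSpace.equiv (Fin d) ℝ).symm ((hS.1.eigenvectorUnitary * Matrix.diagonal (Real.sqrt ∘ hS.1.eigenvalues)
      * (star hS.1.eigenvectorUnitary : Matrix (Fin d) (Fin d) ℝ)).mulVec (EuclideanSpace.equiv (Fin d) ℝ x)))

/-- Total variation distance between two measures:
`sup` over measurable sets `A` of `|P(A) − Q(A)|`. -/
noncomputable def tvDist {Ω : Type*} [MeasurableSpace Ω] (P Q : Measure Ω) : ℝ :=
  ⨆ A : {s : Set Ω // MeasurableSet s}, |(P A).toReal - (Q A).toReal|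

/-- The cumulative distribution function of the standard one-dimensional Gaussian. -/
noncomputable def stdPhi (x : ℝ) : ℝ := (gaussianReal 0 1 (Set.Iic x)).toReal

/-- Frobenius norm of a matrix. -/
noncomputable def frob {d : ℕ} (A : Matrix (Fin d) (Fin d) ℝ) : ℝ :=
  Real.sqrt (∑ i, ∑ j, (A i j) ^ 2)

/-- The empirical mean of a finite set of points. -/
noncomputable def empMean {d : ℕ} (G : Finset (EuclideanSpace ℝ (Fin d))) :
    EuclideanSpace ℝ (Fin d) :=
  (G.card : ℝ)⁻¹ • ∑ x ∈ G, x

/-- The expectation of `f` under the uniform distribution over the finite set `G`. -/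
noncomputable def empExp {α : Type*} (G : Finset α) (f : α → ℝ) : ℝ :=
  (∑ x ∈ G, f x) / G.card

/-- The probability of the event `p` under the uniform distribution over `G`. -/
noncomputable def empProb {α : Type*} (G : Finset α) (p : α → Prop) : ℝ :=
  ((G.filter p).card : ℝ) / G.card

/-- `φ(S', G) = |G ∖ G'| / |S'|` where `G' = S' ∩ G`. -/
noncomputable def phiF {α : Type*} (S' G : Finset α) : ℝ := ((G \ S').card : ℝ) / S'.card

/-- `ψ(S', G) = |E'| / |S'|` where `E' = S' ∩ E`. -/
noncomputable def psiF {α : Type*} (S' E : Finset α) : ℝ := ((S' ∩ E).card : ℝ) / S'.card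

/-- `Δ(S', G) = ψ(S', G) + φ(S', G) log(1/φ(S', G))`. -/
noncomputable def deltaF {α : Type*} (S' G E : Finset α) : ℝ :=
  psiF S' E + phiF S' G * Real.log (1 / phiF S' G)

/-- The even degree-2 polynomial `x ↦ xᵀ A x + c`. -/
noncomputable def quadPoly {d : ℕ} (A : Matrix (Fin d) (Fin d) ℝ) (c : ℝ)
    (x : EuclideanSpace ℝ (Fin d)) : ℝ :=
  (∑ i, ∑ j, A i j * x i * x j) + c

/-- The general even polynomial of degree at most 4,
`x ↦ ∑ T i j k l * xᵢxⱼxₖxₗ + xᵀ A x + c`. -/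
noncomputable def quartPoly {d : ℕ} (T : Fin d → Fin d → Fin d → Fin d → ℝ)
    (A : Matrix (Fin d) (Fin d) ℝ) (c : ℝ) (x : EuclideanSpace ℝ (Fin d)) : ℝ :=
  (∑ i, ∑ j, ∑ k, ∑ l, T i j k l * x i * x j * x k * x l)
    + (∑ i, ∑ j, A i j * x i * x j) + c

/-- `(η, δ)`-goodness of a finite set `G` with respect to `N(μ, I)`, with universal
constant `C₀` in the boundedness condition. -/
structure IsGood (d : ℕ) (η δ C₀ : ℝ) (μ : EuclideanSpace ℝ (Fin d))
    (G : Finset (EuclideanSpace ℝ (Fin d))) : Prop where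
  bounded : ∀ x ∈ G, ‖x - μ‖ ^ 2 ≤ C₀ * d * Real.log (G.card / δ)
  affine : ∀ (w : EuclideanSpace ℝ (Fin d)) (b : ℝ),
    |empProb G (fun x => 0 ≤ (∑ i, w i * x i) + b)
      - ((gaussId d μ) {x | 0 ≤ (∑ i, w i * x i) + b}).toReal|
      ≤ η / (d * Real.log (d / (η * δ)))
  meanClose : ‖empMean G - μ‖ ≤ η
  covClose : ∀ v : EuclideanSpace ℝ (Fin d), ‖v‖ = 1 →
    |empExp G (fun x => (∑ i, v i * (x i - empMean G i)) ^ 2) - 1| ≤ η / d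
  polyMean : ∀ (A : Matrix (Fin d) (Fin d) ℝ) (c : ℝ),
    |empExp G (quadPoly A c) - ∫ x, quadPoly A c x ∂(gaussId d μ)|
      ≤ η * Real.sqrt (∫ x, (quadPoly A c x) ^ 2 ∂(gaussId d μ))
  polySq : ∀ (A : Matrix (Fin d) (Fin d) ℝ) (c : ℝ),
    |empExp G (fun x => (quadPoly A c x) ^ 2) - ∫ x, (quadPoly A c x) ^ 2 ∂(gaussId d μ)|
      ≤ η * ∫ x, (quadPoly A c x) ^ 2 ∂(gaussId d μ)
  polyTail : ∀ (A : Matrix (Fin d) (Fin d) ℝ) (c : ℝ),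
    empProb G (fun x => 0 ≤ quadPoly A c x)
      ≤ ((gaussId d μ) {x | 0 ≤ quadPoly A c x}).toReal + η / (d * Real.log (G.card / δ))

/-- `(η, δ)`-goodness of a finite set `G` with respect to `N(0, Σ)`, with universal
constant `C₀` in the boundedness condition. -/
structure IsGoodCov (d : ℕ) (η δ C₀ : ℝ) {S : Matrix (Fin d) (Fin d) ℝ} (hS : S.PosSemidef)
    (G : Finset (EuclideanSpace ℝ (Fin d))) : Prop where
  bounded : ∀ x ∈ G, (∑ i, ∑ j, x i * S⁻¹ i j * x j) ≤ C₀ * d * Real.log (G.card / δ)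
  deg2Mean : ∀ (A : Matrix (Fin d) (Fin d) ℝ) (c : ℝ),
    |empExp G (quadPoly A c) - ∫ x, quadPoly A c x ∂(gaussCov d hS)|
      ≤ η * Real.sqrt (∫ x, (quadPoly A c x) ^ 2 ∂(gaussCov d hS))
  deg2Sq : ∀ (A : Matrix (Fin d) (Fin d) ℝ) (c : ℝ),
    |empExp G (fun x => (quadPoly A c x) ^ 2) - ∫ x, (quadPoly A c x) ^ 2 ∂(gaussCov d hS)|
      ≤ η * ∫ x, (quadPoly A c x) ^ 2 ∂(gaussCov d hS)
  deg2Tail : ∀ (A : Matrix (Fin d) (Fin d) ℝ) (c : ℝ),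
    empProb G (fun x => 0 ≤ quadPoly A c x)
      ≤ ((gaussCov d hS) {x | 0 ≤ quadPoly A c x}).toReal
        + η ^ 2 / (d * Real.log (G.card / δ))
  deg4Mean : ∀ (T : Fin d → Fin d → Fin d → Fin d → ℝ) (A : Matrix (Fin d) (Fin d) ℝ) (c : ℝ),
    |empExp G (quartPoly T A c) - ∫ x, quartPoly T A c x ∂(gaussCov d hS)|
      ≤ η * Real.sqrt (∫ x, (quartPoly T A c x
          - ∫ y, quartPoly T A c y ∂(gaussCov d hS)) ^ 2 ∂(gaussCov d hS))
  deg4Tail : ∀ (T : Fin d → Fin d → Fin d → Fin d → ℝ) (A : Matrix (Fin d) (Fin d) ℝ) (c : ℝ),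
    empProb G (fun x => 0 ≤ quartPoly T A c x)
      ≤ ((gaussCov d hS) {x | 0 ≤ quartPoly T A c x}).toReal
        + η ^ 2 / (2 * Real.log (1 / η) * (d * Real.log (G.card / δ)) ^ 2)

/-- The trace norm (Schatten-1 norm) of a matrix: the trace of `(AᵀA)^{1/2}`. -/
noncomputable def traceNorm {d : ℕ} (A : Matrix (Fin d) (Fin d) ℝ) : ℝ :=
  ((Matrix.posSemidef_conjTranspose_mul_self A).1.eigenvectorUnitary
    * Matrix.diagonal (Real.sqrt ∘ (Matrix.posSemidef_conjTranspose_mul_self A).1.eigenvalues)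
    * (star (Matrix.posSemidef_conjTranspose_mul_self A).1.eigenvectorUnitary :
      Matrix (Fin d) (Fin d) ℝ)).trace

/-- If `d_TV(P₁, P₂) ≤ ε/(1−ε)` for `0 < ε ≤ 1/2`, then `P₁` and `P₂` admit a
common Huber `ε`-contamination: there are probability measures `Q₁, Q₂` with
`(1−ε)·P₁ + ε·Q₁ = (1−ε)·P₂ + ε·Q₂`. -/
theorem common_huber_contamination {Ω : Type*} [MeasurableSpace Ω] (ε : ℝ)
    (hε0 : 0 < ε) (hε : ε ≤ 1 / 2)
    (P₁ P₂ : Measure Ω) [IsProbabilityMeasure P₁] [IsProbabilityMeasure P₂]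
    (h : tvDist P₁ P₂ ≤ ε / (1 - ε)) :
    ∃ Q₁ Q₂ : Measure Ω, IsProbabilityMeasure Q₁ ∧ IsProbabilityMeasure Q₂ ∧
      ENNReal.ofReal (1 - ε) • P₁ + ENNReal.ofReal ε • Q₁ =
        ENNReal.ofReal (1 - ε) • P₂ + ENNReal.ofReal ε • Q₂ := by
  obtain ⟨s, hs, h1, h2⟩ := hahn_decomposition (μ := P₂) (ν := P₁)
  have hle : P₁.restrict s ≤ P₂.restrict s := by
    refine Measure.le_iff.mpr fun t ht => ?_
    rw [Measure.restrict_apply ht, Measure.restrict_apply ht]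
    exact h1 _ (ht.inter hs) Set.inter_subset_right
  have hle' : P₂.restrict sᶜ ≤ P₁.restrict sᶜ := by
    refine Measure.le_iff.mpr fun t ht => ?_
    rw [Measure.restrict_apply ht, Measure.restrict_apply ht]
    exact h2 _ (ht.inter hs.compl) Set.inter_subset_right
  set νp : Measure Ω := P₂.restrict s - P₁.restrict s with hνpdef
  set νm : Measure Ω := P₁.restrict sᶜ - P₂.restrict sᶜ with hνmdef
  have key : P₁ + νp = P₂ + νm := by
    have e1 : νp + P₁.restrict s = P₂.restrict s := Measure.sub_add_cancel_of_le hle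
    have e2 : νm + P₂.restrict sᶜ = P₁.restrict sᶜ := Measure.sub_add_cancel_of_le hle'
    calc P₁ + νp = (P₁.restrict s + P₁.restrict sᶜ) + νp := by
          rw [Measure.restrict_add_restrict_compl hs]
      _ = P₂.restrict s + P₁.restrict sᶜ := by
          rw [← e1]; abel
      _ = P₂.restrict s + (νm + P₂.restrict sᶜ) := by rw [e2]
      _ = (P₂.restrict s + P₂.restrict sᶜ) + νm := by abel
      _ = P₂ + νm := by rw [Measure.restrict_add_restrict_compl hs]
  have hP1s : P₁ s ≤ P₂ s := h1 s hs subset_rfl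
  set δ : ENNReal := P₂ s - P₁ s with hδdef
  have hδtop : δ ≠ ⊤ := by finiteness
  have hνp : νp Set.univ = δ := by
    rw [hνpdef, Measure.sub_apply MeasurableSet.univ hle]
    simp [Measure.restrict_apply_univ, hδdef]
  have hνm : νm Set.univ = δ := by
    rw [hνmdef, Measure.sub_apply MeasurableSet.univ hle']
    rw [Measure.restrict_apply_univ, Measure.restrict_apply_univ]
    have hc1 : P₁ sᶜ = 1 - P₁ s := by
      rw [measure_compl hs (by finiteness), measure_univ]
    have hc2 : P₂ sᶜ = 1 - P₂ s := by
      rw [measure_compl hs (by finiteness), measure_univ]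
    rw [hc1, hc2, hδdef]
    have hp : P₁ s ≤ 1 := prob_le_one
    have hq : P₂ s ≤ 1 := prob_le_one
    rw [← ENNReal.toReal_eq_toReal_iff' (by finiteness) (by finiteness)]
    rw [ENNReal.toReal_sub_of_le (tsub_le_tsub_left hP1s 1) (by finiteness),
      ENNReal.toReal_sub_of_le hp (by norm_num), ENNReal.toReal_sub_of_le hq (by norm_num),
      ENNReal.toReal_sub_of_le hP1s (by finiteness)]
    ring
  -- δ ≤ ofReal (ε/(1-ε))
  have hεlt1 : ε < 1 := lt_of_le_of_lt hε (by norm_num)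
  have h1ε : (0:ℝ) < 1 - ε := by linarith
  have hδle : δ ≤ ENNReal.ofReal (ε / (1 - ε)) := by
    have hbdd : BddAbove (Set.range fun A : {t : Set Ω // MeasurableSet t} =>
        |(P₁ A).toReal - (P₂ A).toReal|) := by
      refine ⟨1, ?_⟩
      rintro x ⟨A, rfl⟩
      have h1' : (P₁ A).toReal ≤ 1 := by
        simpa using ENNReal.toReal_mono (by finiteness) (prob_le_one (μ := P₁) (s := A))
      have h2' : (P₂ A).toReal ≤ 1 := by
        simpa using ENNReal.toReal_mono (by finiteness) (prob_le_one (μ := P₂) (s := A))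
      have h3' : (0:ℝ) ≤ (P₁ A).toReal := ENNReal.toReal_nonneg
      have h4' : (0:ℝ) ≤ (P₂ A).toReal := ENNReal.toReal_nonneg
      rw [abs_le]; constructor <;> linarith
    have hterm : |(P₁ s).toReal - (P₂ s).toReal| ≤ tvDist P₁ P₂ :=
      le_ciSup hbdd ⟨s, hs⟩
    have hδr : δ.toReal = (P₂ s).toReal - (P₁ s).toReal :=
      ENNReal.toReal_sub_of_le hP1s (by finiteness)
    have hmono : (P₁ s).toReal ≤ (P₂ s).toReal := ENNReal.toReal_mono (by finiteness) hP1s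
    have : δ.toReal ≤ ε / (1 - ε) := by
      rw [hδr]; rw [abs_sub_comm] at hterm
      calc (P₂ s).toReal - (P₁ s).toReal ≤ |(P₂ s).toReal - (P₁ s).toReal| := le_abs_self _
        _ ≤ ε / (1 - ε) := hterm.trans h
    calc δ = ENNReal.ofReal δ.toReal := (ENNReal.ofReal_toReal hδtop).symm
      _ ≤ ENNReal.ofReal (ε / (1 - ε)) := ENNReal.ofReal_le_ofReal this
  set a : ENNReal := ENNReal.ofReal (1 - ε) with hadef
  set b : ENNReal := ENNReal.ofReal ε with hbdef
  have hb0 : b ≠ 0 := by simp [hbdef, hε0.le, ENNReal.ofReal_eq_zero]; linarith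
  have hbt : b ≠ ⊤ := ENNReal.ofReal_ne_top
  have hat : a ≠ ⊤ := ENNReal.ofReal_ne_top
  have haδb : a * δ ≤ b := by
    calc a * δ ≤ a * ENNReal.ofReal (ε / (1 - ε)) := mul_le_mul_right hδle a
      _ = ENNReal.ofReal ((1 - ε) * (ε / (1 - ε))) := by
          rw [hadef, ENNReal.ofReal_mul h1ε.le]
      _ = b := by rw [hbdef]; congr 1; field_simp
  have hcle : b⁻¹ * (a * δ) ≤ 1 := by
    calc b⁻¹ * (a * δ) ≤ b⁻¹ * b := mul_le_mul_right haδb b⁻¹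
      _ = 1 := ENNReal.inv_mul_cancel hb0 hbt
  set c : ENNReal := 1 - b⁻¹ * (a * δ) with hcdef
  refine ⟨(b⁻¹ * a) • νp + c • P₁, (b⁻¹ * a) • νm + c • P₁, ?_, ?_, ?_⟩
  · constructor
    rw [Measure.add_apply, Measure.smul_apply, Measure.smul_apply, hνp, measure_univ,
      smul_eq_mul, smul_eq_mul, mul_one, hcdef, mul_assoc]
    exact add_tsub_cancel_of_le hcle
  · constructor
    rw [Measure.add_apply, Measure.smul_apply, Measure.smul_apply, hνm, measure_univ,
      smul_eq_mul, smul_eq_mul, mul_one, hcdef, mul_assoc]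
    exact add_tsub_cancel_of_le hcle
  · have hba : b * (b⁻¹ * a) = a := by
      rw [← mul_assoc, ENNReal.mul_inv_cancel hb0 hbt, one_mul]
    have expand : ∀ ν : Measure Ω, b • ((b⁻¹ * a) • ν + c • P₁) = a • ν + (b * c) • P₁ := by
      intro ν
      rw [smul_add, smul_smul, smul_smul, hba]
    show a • P₁ + b • ((b⁻¹ * a) • νp + c • P₁) = a • P₂ + b • ((b⁻¹ * a) • νm + c • P₁)
    rw [expand, expand, ← add_assoc, ← add_assoc, ← smul_add, ← smul_add, key]
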